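/- arXiv:math/0506542 — 3 statements merged into one kernel-verified Lean document; each statement's English description precedes it below -/
import Mathlib

section
/- For every commutative ring A, every family of weights R : ℤ → A, every integer a and all natural numbers j ≥ 1 and k ≥ 0: Π_{a,a+2j−1}(j) · Σ_{ℓ=1}^{k} (−1)^{k−ℓ} · Π_{a,a+2k−1}(k−ℓ) · Z⁺_{a,a+2j−1}(2ℓ−1) equals (−1)^{k−j} · Π_{a,a+2k−1}(k) if k ≥ j, and equals 0 if k < j. -/
open Finset

variable {A : Type*} [CommRing A]

/-- End height of a walk starting at a given height, with steps given by a list of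
Booleans (`true` = ascending step `+1`, `false` = descending step `-1`). -/
def walkEnd : ℤ → List Bool → ℤ
  | a, [] => a
  | a, true :: s => walkEnd (a + 1) s
  | a, false :: s => walkEnd (a - 1) s

/-- Weight of a walk: the product of `R h` over all descending steps `h → h - 1`. -/
def walkWeight (R : ℤ → A) : ℤ → List Bool → A
  | _, [] => 1
  | a, true :: s => walkWeight R (a + 1) s
  | a, false :: s => R a * walkWeight R (a - 1) s

/-- Whether every height visited by the walk (including the first and last) is `≥ c`. -/
def walkAbove (c : ℤ) : ℤ → List Bool → Bool
  | a, [] => decide (c ≤ a)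
  | a, true :: s => decide (c ≤ a) && walkAbove c (a + 1) s
  | a, false :: s => decide (c ≤ a) && walkAbove c (a - 1) s

/-- `Zw R a b k`: the generating function of walks of length `k` from height `a` to
height `b`, each walk weighted by `R h` per descending step from height `h`. -/
def Zw (R : ℤ → A) (a b : ℤ) (k : ℕ) : A :=
  ∑ s : Fin k → Bool,
    if walkEnd a (List.ofFn s) = b then walkWeight R a (List.ofFn s) else 0

/-- `Zwp R a b k`: the same generating function, restricted to walks staying at
heights `≥ a` ("positive walks"). -/
def Zwp (R : ℤ → A) (a b : ℤ) (k : ℕ) : A :=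
  ∑ s : Fin k → Bool,
    if walkEnd a (List.ofFn s) = b ∧ walkAbove a a (List.ofFn s) = true then
      walkWeight R a (List.ofFn s)
    else 0

/-- `Pdim R a b k`: hard-dimer partition function on the segment `[a,b]`: the sum over
`k`-element subsets `S` of `{a+1, …, b}` with no two consecutive elements of
`∏ i in S, R i` (a dimer on `[i-1,i]` carries weight `R i`). -/
noncomputable def Pdim (R : ℤ → A) (a b : ℤ) (k : ℕ) : A :=
  ∑ S ∈ Finset.powersetCard k (Finset.Icc (a + 1) b),
    if ∀ i ∈ S, i + 1 ∉ S then ∏ i ∈ S, R i else 0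

/-- `Vp R g m a b = Σ_{k=1}^{m} g_k • Zw R a b (2k-1)`: grand-canonical generating
function for walks of odd length from `a` to `b`. -/
def Vp (R : ℤ → A) (g : ℕ → A) (m : ℕ) (a b : ℤ) : A :=
  ∑ k ∈ Finset.Icc 1 m, g k * Zw R a b (2 * k - 1)

/-- The conserved quantities `Γ_{2i}(n)`; `Gam R g m i n` stands for `Γ_{2i}(n)`. -/
def Gam (R : ℤ → A) (g : ℕ → A) (m : ℕ) (i : ℕ) (n : ℤ) : A :=
  if i = 0 then R (n - 1) - Vp R g m (n - 1) (n - 2) + (if n = 0 then 1 else 0)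
  else
    Zwp R (n - 1) (n - 1) (2 * i) *
        (R (n - 1) - Vp R g m (n - 1) (n - 2) + (if n = 0 then 1 else 0)) -
      ∑ j ∈ Finset.Icc 1 i,
        Zwp R (n - 1) (n - 1 + 2 * (j : ℤ)) (2 * i) * Vp R g m (n + 2 * (j : ℤ) - 1) (n - 2)

/-- The symmetric conserved quantities `Γ̃_{2i}(n)`; `Gamt R g m i n` stands
for `Γ̃_{2i}(n)`. -/
def Gamt (R : ℤ → A) (g : ℕ → A) (m : ℕ) (i : ℕ) (n : ℤ) : A :=
  if i = 0 then R n - Vp R g m n (n - 1)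
  else
    (Zw R n (n - 1) (2 * i - 1) - R (n - 1) * R (n + 1) * Zw R (n - 2) (n + 1) (2 * i - 1)) *
        (R n - Vp R g m n (n - 1)) -
      ∑ j ∈ Finset.Icc 1 i,
        (Zw R (n - (j : ℤ)) (n + (j : ℤ) - 1) (2 * i - 1) -
            R (n - (j : ℤ) - 1) * R (n + (j : ℤ) + 1) *
              Zw R (n - (j : ℤ) - 2) (n + (j : ℤ) + 1) (2 * i - 1)) *
          Vp R g m (n + (j : ℤ)) (n - (j : ℤ) - 1)

/-- The master equation: `R i = 0` for `i < 0` and `R n = 1 + V'_{n,n-1}` for `n ≥ 0`. -/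
def MasterEq (R : ℤ → A) (g : ℕ → A) (m : ℕ) : Prop :=
  (∀ i : ℤ, i < 0 → R i = 0) ∧ ∀ n : ℤ, 0 ≤ n → R n = 1 + Vp R g m n (n - 1)

/-- `Zodd R a b i = Zw R a b (2i-1)`, with the convention that for `i = 0`
(walks of length `-1`) it equals `1` if `b = a - 1` and `0` otherwise. -/
def Zodd (R : ℤ → A) (a b : ℤ) (i : ℕ) : A :=
  if i = 0 then (if b = a - 1 then 1 else 0) else Zw R a b (2 * i - 1)

/-- Binomial coefficient with an integer lower index, with the convention that it
vanishes for negative lower index. -/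
def Cz (n : ℕ) (p : ℤ) : ℤ := if 0 ≤ p then n.choose p.toNat else 0

/-!
Splitting off the last step of a walk gives
`Z⁺_{a,b}(n+1) = Z⁺_{a,b-1}(n) + R_{b+1} Z⁺_{a,b+1}(n)` for `b ≥ a`, and removing the last site
of the segment gives the dimer recursion `Π_{a,b+1}(p+1) = Π_{a,b}(p+1) + R_{b+1} Π_{a,b-1}(p)`.
So the dimer polynomials `D_n(x) = Σ_p (-1)^p Π_{a,a+n-1}(p) x^(n-2p)` satisfy the three-term
recurrence of the transfer matrix `T` of walks above `a`, and induction on `n` gives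
`D_n(T) e_a = e_{a+n}` (`dimerWalkSum_eq`), that is,
`Σ_p (-1)^p Π_{a,a+n-1}(p) Z⁺_{a,b}(n-2p) = δ_{b,a+n}`.

For `n = 2k`, splitting off the last step once more turns this into
`W(b-1) + R_{b+1} W(b+1) = δ_{b,a+2k}` for `b > a`, where `W(b)` (`oddWalkSum`) is the inner sum
of the theorem with end point `b`. As `W` vanishes beyond `a+2k-1`, and close-packed dimers satisfy
`Π_{a,a+2j+1}(j+1) = R_{a+2j+1} Π_{a,a+2j-1}(j)`, downward induction on `j` gives the claim.
-/

theorem walkEnd_append_singleton (a : ℤ) (s : List Bool) (x : Bool) :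
    walkEnd a (s ++ [x]) = if x then walkEnd a s + 1 else walkEnd a s - 1 := by
  induction s generalizing a with
  | nil => cases x <;> rfl
  | cons y s ih => cases y <;> exact ih _

theorem walkWeight_append_singleton (R : ℤ → A) (a : ℤ) (s : List Bool) (x : Bool) :
    walkWeight R a (s ++ [x]) = walkWeight R a s * if x then 1 else R (walkEnd a s) := by
  induction s generalizing a with
  | nil => cases x <;> simp [walkWeight, walkEnd]
  | cons y s ih => cases y <;> simp [walkWeight, walkEnd, ih, mul_assoc]

theorem walkAbove_append_singleton (c a : ℤ) (s : List Bool) (x : Bool) :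
    walkAbove c a (s ++ [x]) = (walkAbove c a s && decide (c ≤ walkEnd a (s ++ [x]))) := by
  induction s generalizing a with
  | nil => cases x <;> simp [walkAbove, walkEnd]
  | cons y s ih => cases y <;> simp [walkAbove, walkEnd, ih, Bool.and_assoc]

theorem le_walkEnd_of_walkAbove {c a : ℤ} {s : List Bool} (h : walkAbove c a s = true) :
    c ≤ walkEnd a s := by
  induction s generalizing a with
  | nil => simpa [walkAbove, walkEnd] using h
  | cons y s ih => cases y <;> simp_all [walkAbove, walkEnd]

theorem Zwp_zero (R : ℤ → A) (a b : ℤ) : Zwp R a b 0 = if b = a then 1 else 0 := by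
  simp [Zwp, walkEnd, walkAbove, walkWeight, eq_comm]

theorem Zwp_succ (R : ℤ → A) (a b : ℤ) (n : ℕ) :
    Zwp R a b (n + 1) =
      if a ≤ b then Zwp R a (b - 1) n + R (b + 1) * Zwp R a (b + 1) n else 0 := by
  rw [Zwp, ← (Fin.snocEquiv fun _ => Bool).sum_comp, Fintype.sum_prod_type, Fintype.sum_bool,
    Zwp, Zwp, mul_sum, ← sum_add_distrib, ← sum_add_distrib, ite_sum_zero]
  refine sum_congr rfl fun s _ => ?_
  simp only [Fin.snocEquiv_apply, List.ofFn_succ', Fin.snoc_castSucc, Fin.snoc_last,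
    List.concat_eq_append, walkEnd_append_singleton, walkWeight_append_singleton,
    walkAbove_append_singleton, ↓reduceIte, Bool.false_eq_true, mul_one, Bool.and_eq_true,
    decide_eq_true_eq]
  by_cases hs : walkAbove a a (List.ofFn s) = true
  · have := le_walkEnd_of_walkAbove hs
    simp only [hs, true_and, and_true]
    generalize walkEnd a (List.ofFn s) = e at *
    split_ifs <;> first | omega | (subst_vars; ring)
  · simp [hs]

theorem Zwp_eq_zero_of_add_lt (R : ℤ → A) {a b : ℤ} {n : ℕ} (h : a + n < b) : Zwp R a b n = 0 := by
  induction n generalizing b with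
  | zero => rw [Zwp_zero, if_neg (by omega)]
  | succ n ih => rw [Zwp_succ, ih (by omega), ih (by omega), mul_zero, add_zero, ite_self]

theorem Pdim_zero (R : ℤ → A) (a b : ℤ) : Pdim R a b 0 = 1 := by
  simp [Pdim]

theorem Pdim_succ_eq_zero_of_le (R : ℤ → A) {a b : ℤ} (h : b ≤ a) (p : ℕ) :
    Pdim R a b (p + 1) = 0 := by
  rw [Pdim, Icc_eq_empty (by omega), powersetCard_eq_empty.2 (by simp), sum_empty]

theorem forall_add_one_notMem_insert_iff {S : Finset ℤ} {x : ℤ} (hS : ∀ i ∈ S, i ≤ x) :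
    (∀ i ∈ insert (x + 1) S, i + 1 ∉ insert (x + 1) S) ↔ x ∉ S ∧ ∀ i ∈ S, i + 1 ∉ S := by
  rw [forall_mem_insert]
  simp only [mem_insert, not_or]
  constructor
  · rintro ⟨-, h⟩
    exact ⟨fun hx => (h x hx).1 rfl, fun i hi => (h i hi).2⟩
  · rintro ⟨hx, h⟩
    refine ⟨⟨by omega, fun hS' => by have := hS _ hS'; omega⟩, fun i hi => ⟨?_, h i hi⟩⟩
    rintro hi'
    exact hx (by rwa [show x = i by omega])

theorem sum_powersetCard_succ_insert {α M : Type*} [DecidableEq α] [AddCommMonoid M] {x : α}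
    {s : Finset α} (hx : x ∉ s) (n : ℕ) (f : Finset α → M) :
    ∑ t ∈ powersetCard (n + 1) (insert x s), f t =
      ∑ t ∈ powersetCard (n + 1) s, f t + ∑ t ∈ powersetCard n s, f (insert x t) := by
  have hxt : ∀ {t}, t ∈ powersetCard n s → x ∉ t := fun ht hxt => hx ((mem_powersetCard.1 ht).1 hxt)
  rw [powersetCard_succ_insert hx, sum_union, sum_image]
  · intro t ht u hu htu
    rw [← erase_insert (hxt ht), ← erase_insert (hxt hu)]
    exact congrArg (·.erase x) htu
  · refine disjoint_left.2 fun t ht ht' => ?_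
    obtain ⟨u, -, rfl⟩ := mem_image.1 ht'
    exact hx ((mem_powersetCard.1 ht).1 (mem_insert_self _ _))

theorem Pdim_add_one (R : ℤ → A) {a b : ℤ} (h : a ≤ b) (p : ℕ) :
    Pdim R a (b + 1) (p + 1) = Pdim R a b (p + 1) + R (b + 1) * Pdim R a (b - 1) p := by
  have hle : ∀ {T c}, T ∈ powersetCard p (Icc (a + 1) c) → ∀ i ∈ T, i ≤ c :=
    fun hT i hi => (mem_Icc.1 ((mem_powersetCard.1 hT).1 hi)).2
  rw [Pdim, ← insert_Icc_right_eq_Icc_add_one (by omega), sum_powersetCard_succ_insert (by simp),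
    Pdim, Pdim, mul_sum]
  congr 1
  rw [← sum_subset (powersetCard_mono (Icc_subset_Icc_right (by omega : b - 1 ≤ b)))]
  · refine sum_congr rfl fun T hT => ?_
    have hbT : b ∉ T := fun hbT => by have := hle hT b hbT; omega
    have hT₁ : ∀ i ∈ T, i ≤ b := fun i hi => by have := hle hT i hi; omega
    simp only [forall_add_one_notMem_insert_iff hT₁, hbT, not_false_eq_true, true_and,
      prod_insert (fun h => by have := hT₁ _ h; omega : b + 1 ∉ T), mul_ite, mul_zero]
  · intro T hT hT'
    have hbT : b ∈ T := by
      by_contra hbT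
      refine hT' (mem_powersetCard.2 ⟨fun i hi => ?_, (mem_powersetCard.1 hT).2⟩)
      have := mem_Icc.1 ((mem_powersetCard.1 hT).1 hi)
      exact mem_Icc.2 ⟨this.1, by have : i ≠ b := fun h => hbT (h ▸ hi); omega⟩
    exact if_neg fun h => ((forall_add_one_notMem_insert_iff (hle hT)).1 h).1 hbT

theorem Pdim_succ_eq_zero_of_le_add (R : ℤ → A) {a b : ℤ} {p : ℕ} (h : b ≤ a + 2 * p) :
    Pdim R a b (p + 1) = 0 := by
  suffices ∀ n : ℕ, ∀ b : ℤ, ∀ p : ℕ, b ≤ a + n → b ≤ a + 2 * p → Pdim R a b (p + 1) = 0 from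
    this (b - a).toNat b p (by omega) h
  intro n
  induction n with
  | zero => exact fun b p hb _ => Pdim_succ_eq_zero_of_le R (by omega) p
  | succ n ih =>
    intro b p hbn hbp
    rcases le_or_gt b a with hba | hab
    · exact Pdim_succ_eq_zero_of_le R hba p
    obtain ⟨c, rfl⟩ : ∃ c, b = c + 1 := ⟨b - 1, by ring⟩
    obtain _ | q := p
    · omega
    · rw [Pdim_add_one R (by omega), ih c (q + 1) (by omega) (by omega),
        ih (c - 1) q (by omega) (by omega), zero_add, mul_zero]

theorem Pdim_eq_zero_of_lt (R : ℤ → A) (a : ℤ) {n p : ℕ} (h : n < 2 * p) :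
    Pdim R a (a + n - 1) p = 0 := by
  obtain ⟨q, rfl⟩ : ∃ q, p = q + 1 := ⟨p - 1, by omega⟩
  exact Pdim_succ_eq_zero_of_le_add R (by omega)

theorem Pdim_closePacked_succ (R : ℤ → A) (a : ℤ) (j : ℕ) :
    Pdim R a (a + 2 * j + 1) (j + 1) = R (a + 2 * j + 1) * Pdim R a (a + 2 * j - 1) j := by
  rw [Pdim_add_one R (by omega), Pdim_succ_eq_zero_of_le_add R le_rfl, zero_add]

-- The truncated `n - 2 * p` is harmless: `Pdim` vanishes once `n < 2 * p` (`Pdim_eq_zero_of_lt`).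
noncomputable def dimerWalkSum (R : ℤ → A) (a : ℤ) (n : ℕ) (b : ℤ) : A :=
  ∑ p ∈ range (n + 1), (-1) ^ p * Pdim R a (a + n - 1) p * Zwp R a b (n - 2 * p)

theorem dimerWalkSum_eq_sum_range (R : ℤ → A) (a : ℤ) {n N : ℕ} (h : n < 2 * N) (b : ℤ) :
    dimerWalkSum R a n b =
      ∑ p ∈ range N, (-1) ^ p * Pdim R a (a + n - 1) p * Zwp R a b (n - 2 * p) := by
  have hvanish : ∀ p, n < 2 * p → (-1) ^ p * Pdim R a (a + n - 1) p * Zwp R a b (n - 2 * p) = 0 :=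
    fun p hp => by rw [Pdim_eq_zero_of_lt R a hp, mul_zero, zero_mul]
  rcases le_total (n + 1) N with hN | hN
  · exact sum_subset (range_subset_range.2 hN) fun p _ hp => hvanish p (by simp at hp; omega)
  · exact (sum_subset (range_subset_range.2 hN) fun p _ hp => hvanish p (by simp at hp; omega)).symm

theorem sum_range_Pdim_mul_Zwp_succ (R : ℤ → A) (a : ℤ) {n N : ℕ} (h : n < 2 * N) (b : ℤ) :
    ∑ p ∈ range N, (-1) ^ p * Pdim R a (a + n - 1) p * Zwp R a b (n + 1 - 2 * p) =
      if a ≤ b then dimerWalkSum R a n (b - 1) + R (b + 1) * dimerWalkSum R a n (b + 1)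
      else 0 := by
  have hterm (p : ℕ) : (-1) ^ p * Pdim R a (a + n - 1) p * Zwp R a b (n + 1 - 2 * p) =
      if a ≤ b then (-1) ^ p * Pdim R a (a + n - 1) p * Zwp R a (b - 1) (n - 2 * p) +
        R (b + 1) * ((-1) ^ p * Pdim R a (a + n - 1) p * Zwp R a (b + 1) (n - 2 * p))
      else 0 := by
    rcases le_or_gt (2 * p) n with hp | hp
    · rw [show n + 1 - 2 * p = n - 2 * p + 1 by omega, Zwp_succ]
      split_ifs <;> ring
    · rw [Pdim_eq_zero_of_lt R a hp]
      simp
  rw [sum_congr rfl fun p _ => hterm p, ← ite_sum_zero, sum_add_distrib, ← mul_sum,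
    ← dimerWalkSum_eq_sum_range R a h, ← dimerWalkSum_eq_sum_range R a h]

theorem dimerWalkSum_add_two (R : ℤ → A) (a : ℤ) (n : ℕ) (b : ℤ) :
    dimerWalkSum R a (n + 2) b =
      (if a ≤ b then
        dimerWalkSum R a (n + 1) (b - 1) + R (b + 1) * dimerWalkSum R a (n + 1) (b + 1)
      else 0) - R (a + n + 1) * dimerWalkSum R a n b := by
  have hPdim (q : ℕ) : Pdim R a (a + ((n + 2 : ℕ) : ℤ) - 1) (q + 1) =
      Pdim R a (a + ((n + 1 : ℕ) : ℤ) - 1) (q + 1) + R (a + n + 1) * Pdim R a (a + n - 1) q := by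
    have := Pdim_add_one R (show a ≤ a + n by omega) q
    push_cast
    rwa [show a + (n + 2) - 1 = a + n + 1 by ring, show a + (n + 1) - 1 = a + n by ring]
  calc dimerWalkSum R a (n + 2) b
      = ∑ p ∈ range (n + 3),
            (-1) ^ p * Pdim R a (a + ((n + 1 : ℕ) : ℤ) - 1) p * Zwp R a b (n + 1 + 1 - 2 * p) -
          R (a + n + 1) *
            ∑ q ∈ range (n + 2), (-1) ^ q * Pdim R a (a + n - 1) q * Zwp R a b (n - 2 * q) := by
        rw [dimerWalkSum, sum_range_succ' _ (n + 2), sum_range_succ' _ (n + 2), Pdim_zero,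
          Pdim_zero, mul_sum, eq_sub_iff_add_eq, add_right_comm, ← sum_add_distrib]
        congr 1
        refine sum_congr rfl fun q _ => ?_
        rw [hPdim, show n + 2 - 2 * (q + 1) = n - 2 * q by omega]
        ring
    _ = _ := by
        rw [sum_range_Pdim_mul_Zwp_succ R a (by omega), ← dimerWalkSum_eq_sum_range R a (by omega)]

theorem dimerWalkSum_eq (R : ℤ → A) (a : ℤ) (n : ℕ) (b : ℤ) :
    dimerWalkSum R a n b = if b = a + n then 1 else 0 := by
  induction n using Nat.twoStepInduction generalizing b with
  | zero => simp [dimerWalkSum, Pdim_zero, Zwp_zero]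
  | one =>
    simp only [dimerWalkSum, sum_range_succ, Pdim_zero, Zwp_succ, Zwp_zero,
      Pdim_succ_eq_zero_of_le R (show a + ((1 : ℕ) : ℤ) - 1 ≤ a by omega)]
    split_ifs <;> first | omega | ring
  | more n ih₀ ih₁ =>
    rw [dimerWalkSum_add_two, ih₀, ih₁, ih₁]
    push_cast
    split_ifs <;> subst_vars <;> first | omega | ring

noncomputable def oddWalkSum (R : ℤ → A) (a : ℤ) (k : ℕ) (b : ℤ) : A :=
  ∑ l ∈ Icc 1 k, (-1) ^ (k - l) * Pdim R a (a + 2 * k - 1) (k - l) * Zwp R a b (2 * l - 1)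

theorem oddWalkSum_eq_zero (R : ℤ → A) (a : ℤ) {k : ℕ} {b : ℤ} (h : a + 2 * k - 1 < b) :
    oddWalkSum R a k b = 0 :=
  sum_eq_zero fun l hl => by
    rw [Zwp_eq_zero_of_add_lt R (by have := mem_Icc.1 hl; omega), mul_zero]

theorem oddWalkSum_sub_one_add (R : ℤ → A) (a : ℤ) (k : ℕ) {b : ℤ} (hb : a < b) :
    oddWalkSum R a k (b - 1) + R (b + 1) * oddWalkSum R a k (b + 1) =
      if b = a + 2 * k then 1 else 0 := by
  have h := dimerWalkSum_eq R a (2 * k) b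
  rw [dimerWalkSum_eq_sum_range R a (N := k + 1) (by omega), ← sum_range_reflect, range_eq_Ico,
    sum_eq_sum_Ico_succ_bot (by omega), Ico_add_one_right_eq_Icc] at h
  push_cast at h
  rw [← h, oddWalkSum, oddWalkSum, mul_sum, ← sum_add_distrib,
    Nat.sub_zero, Nat.sub_self, Zwp_zero, if_neg (by omega), mul_zero, zero_add]
  refine sum_congr rfl fun l hl => ?_
  rw [mem_Icc] at hl
  rw [show 2 * k - 2 * (k - l) = 2 * l - 1 + 1 by omega,
    Zwp_succ, if_pos hb.le]
  ring

theorem Pdim_mul_oddWalkSum (R : ℤ → A) (a : ℤ) {j k : ℕ} (hj : 1 ≤ j) (hjk : j ≤ k) :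
    Pdim R a (a + 2 * j - 1) j * oddWalkSum R a k (a + 2 * j - 1) =
      (-1) ^ (k - j) * Pdim R a (a + 2 * k - 1) k := by
  induction hjk using Nat.decreasingInduction with
  | self =>
    have h := oddWalkSum_sub_one_add R a k (b := a + 2 * k) (by omega)
    rw [if_pos rfl, oddWalkSum_eq_zero R a (b := a + 2 * k + 1) (by omega), mul_zero, add_zero] at h
    rw [h, Nat.sub_self, pow_zero, one_mul, mul_one]
  | of_succ j hjk ih =>
    have h := oddWalkSum_sub_one_add R a k (b := a + 2 * j) (by omega)
    rw [if_neg (by omega), add_eq_zero_iff_eq_neg] at h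
    have ih := ih (by omega)
    push_cast at ih
    rw [show a + 2 * ((j : ℤ) + 1) - 1 = a + 2 * j + 1 by ring, Pdim_closePacked_succ] at ih
    rw [h, show k - j = k - (j + 1) + 1 by omega, pow_succ]
    linear_combination -ih

/-- the pair generating function identity. -/
theorem stmt_5 {A : Type*} [CommRing A] (R : ℤ → A) (a : ℤ) (j k : ℕ) (hj : 1 ≤ j) :
    Pdim R a (a + 2 * (j : ℤ) - 1) j *
        ∑ l ∈ Finset.Icc 1 k,
          (-1 : A) ^ (k - l) * Pdim R a (a + 2 * (k : ℤ) - 1) (k - l) *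
            Zwp R a (a + 2 * (j : ℤ) - 1) (2 * l - 1) =
      if j ≤ k then (-1 : A) ^ (k - j) * Pdim R a (a + 2 * (k : ℤ) - 1) k else 0 := by
  change Pdim R a (a + 2 * j - 1) j * oddWalkSum R a k (a + 2 * j - 1) = _
  split_ifs with hjk
  · exact Pdim_mul_oddWalkSum R a hj hjk
  · rw [oddWalkSum_eq_zero R a (by omega), mul_zero]
end

section
/- For every commutative ring A, every family of weights R : ℤ → A, every m ≥ 1, all g_1, …, g_m ∈ A and all integers a, b, the grand-canonical walk generating function satisfies V'_{a+1,b} + R_a · V'_{a−1,b} = V'_{a,b−1} + R_{b+1} · V'_{a,b+1}. -/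
open Finset

variable {A : Type*} [CommRing A]

/-!
Splitting a walk of length `k + 1` off at its first step, or at its last step, gives two
expansions of `Z_{a,b}(k + 1)`; equating them is the identity for every single `Z(k)`, and
`V'` is a linear combination of these.
-/

lemma walkEnd_append (a : ℤ) (s t : List Bool) :
    walkEnd a (s ++ t) = walkEnd (walkEnd a s) t := by
  induction s generalizing a with
  | nil => rfl
  | cons x s ih => cases x <;> simp [walkEnd, ih]

lemma walkWeight_append (R : ℤ → A) (a : ℤ) (s t : List Bool) :
    walkWeight R a (s ++ t) = walkWeight R a s * walkWeight R (walkEnd a s) t := by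
  induction s generalizing a with
  | nil => simp [walkWeight, walkEnd]
  | cons x s ih => cases x <;> simp [walkWeight, walkEnd, ih, mul_assoc]

lemma Zw_succ_left (R : ℤ → A) (a b : ℤ) (k : ℕ) :
    Zw R a b (k + 1) = Zw R (a + 1) b k + R a * Zw R (a - 1) b k := by
  rw [Zw, ← (Fin.consEquiv fun _ => Bool).sum_comp, Fintype.sum_prod_type, Fintype.sum_bool]
  simp only [Fin.consEquiv_apply, List.ofFn_succ, Fin.cons_zero, Fin.cons_succ, walkEnd,
    walkWeight, Zw, Finset.mul_sum, mul_ite, mul_zero]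

lemma Zw_succ_right (R : ℤ → A) (a b : ℤ) (k : ℕ) :
    Zw R a b (k + 1) = Zw R a (b - 1) k + R (b + 1) * Zw R a (b + 1) k := by
  have ofFn_snoc (x : Bool) (s : Fin k → Bool) :
      List.ofFn (Fin.snocEquiv (fun _ => Bool) (x, s)) = List.ofFn s ++ [x] := by
    rw [List.ofFn_succ']
    simp [Fin.snocEquiv]
  rw [Zw, ← (Fin.snocEquiv fun _ => Bool).sum_comp, Fintype.sum_prod_type, Fintype.sum_bool,
    Zw, Zw, Finset.mul_sum]
  simp only [ofFn_snoc, walkEnd_append, walkWeight_append, walkEnd, walkWeight, mul_one]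
  congr 1 <;> refine Finset.sum_congr rfl fun s _ => ?_
  · simp only [eq_sub_iff_add_eq]
  · by_cases h : walkEnd a (List.ofFn s) = b + 1
    · simp [h, mul_comm]
    · simp [h, show walkEnd a (List.ofFn s) - 1 ≠ b by omega]

lemma Zw_succ_left_eq_succ_right (R : ℤ → A) (a b : ℤ) (k : ℕ) :
    Zw R (a + 1) b k + R a * Zw R (a - 1) b k =
      Zw R a (b - 1) k + R (b + 1) * Zw R a (b + 1) k := by
  rw [← Zw_succ_left, Zw_succ_right]

theorem stmt_6_general {A : Type*} [CommRing A] (R : ℤ → A) (m : ℕ) (g : ℕ → A)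
    (a b : ℤ) :
    Vp R g m (a + 1) b + R a * Vp R g m (a - 1) b =
      Vp R g m a (b - 1) + R (b + 1) * Vp R g m a (b + 1) := by
  simp only [Vp, Finset.mul_sum, ← Finset.sum_add_distrib]
  refine Finset.sum_congr rfl fun k _ => ?_
  linear_combination g k * Zw_succ_left_eq_succ_right R a b (2 * k - 1)

/-- the fundamental identity for the grand-canonical generating
function `V'`. -/
theorem stmt_6 {A : Type*} [CommRing A] (R : ℤ → A) (m : ℕ) (hm : 1 ≤ m) (g : ℕ → A)
    (a b : ℤ) :
    Vp R g m (a + 1) b + R a * Vp R g m (a - 1) b =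
      Vp R g m a (b - 1) + R (b + 1) * Vp R g m a (b + 1) :=
  stmt_6_general R m g a b
end

section
/- Equivalence of the two formulas for the multi-point functions: let A be a commutative ring, r ∈ A, m ≥ 2 and g_2, …, g_m ∈ A. For each natural number i define γ_{2i} = (C(2i,i) − C(2i,i−1)) r^i − Σ_{k=2}^{m} g_k r^{i+k} Σ_{j=1}^{min(i,k−1)} (C(2i,i−j) − C(2i,i−j−1)) C(2k−1,k+j). Then for every natural number i, Σ_{ℓ=0}^{i} γ_{2i−2ℓ} · C(2ℓ,ℓ) · r^ℓ = C(2i+1,i) r^i − Σ_{k=2}^{m} g_k r^{i+k} Σ_{j=1}^{min(i,k−1)} C(2i+1,i−j) C(2k−1,k+j). -/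
open Finset

variable {A : Type*} [CommRing A]

/-- The multi-point function `γ_{2i}` given by the explicit binomial formula. -/
def gammaVal {A : Type*} [CommRing A] (r : A) (g : ℕ → A) (m : ℕ) (i : ℕ) : A :=
  ((Cz (2 * i) (i : ℤ) - Cz (2 * i) ((i : ℤ) - 1) : ℤ) : A) * r ^ i -
    ∑ k ∈ Finset.Icc 2 m, g k * r ^ (i + k) *
      ∑ j ∈ Finset.Icc 1 (min i (k - 1)),
        ((Cz (2 * i) ((i : ℤ) - j) - Cz (2 * i) ((i : ℤ) - j - 1) : ℤ) : A) *
          ((Cz (2 * k - 1) ((k : ℤ) + j) : ℤ) : A)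

/-!
Both sides are `r ^ i` times one form, linear in a coefficient sequence `b`: for the left side
`b` is a convolution of the central binomials `C(2l, l)` with the ballot numbers
`B(n, j) = C(2n, n - j) - C(2n, n - j - 1)`, for the right side `b j = C(2i + 1, i - j)`.
So everything reduces to `∑ l ≤ i, C(2l, l) B(i - l, j) = C(2i + 1, i - j)` for `j ≥ 0`.
Applying Pascal's rule twice, `B(n + 1, j) = B(n, j - 1) + 2 B(n, j) + B(n, j + 1)`, and
`C(2i + 3, p)` obeys the same recursion in `p`; this carries an induction on `i`, except at
`j = 0`, where the new term `C(2i + 2, i + 1)` appears and the reflection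
`B(n, -1) = -B(n, 0)` closes the gap.
-/

lemma Cz_natCast (n k : ℕ) : Cz n k = n.choose k := by
  simp [Cz]

lemma Cz_of_neg {n : ℕ} {p : ℤ} (h : p < 0) : Cz n p = 0 := by
  simp [Cz, not_le.2 h]

lemma Cz_of_lt {n : ℕ} {p : ℤ} (h : (n : ℤ) < p) : Cz n p = 0 := by
  lift p to ℕ using (by omega)
  rw [Cz_natCast, Nat.choose_eq_zero_of_lt (by omega), Nat.cast_zero]

lemma Cz_succ (n : ℕ) (p : ℤ) : Cz (n + 1) p = Cz n p + Cz n (p - 1) := by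
  rcases lt_trichotomy p 0 with hp | rfl | hp
  · rw [Cz_of_neg hp, Cz_of_neg hp, Cz_of_neg (by omega), add_zero]
  · simp [Cz]
  · obtain ⟨k, rfl⟩ : ∃ k : ℕ, p = (k + 1 : ℕ) := ⟨(p - 1).toNat, by omega⟩
    rw [Nat.cast_succ, add_sub_cancel_right, ← Nat.cast_succ, Cz_natCast, Cz_natCast,
      Cz_natCast, Nat.choose_succ_succ', Nat.cast_add, add_comm]

lemma Cz_add_two (n : ℕ) (p : ℤ) :
    Cz (n + 2) p = Cz n p + 2 * Cz n (p - 1) + Cz n (p - 2) := by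
  rw [Cz_succ, Cz_succ, Cz_succ n (p - 1), sub_sub, one_add_one_eq_two]
  ring

lemma Cz_symm (n : ℕ) (p : ℤ) : Cz n (n - p) = Cz n p := by
  rcases lt_or_ge p 0 with hp | hp
  · rw [Cz_of_neg hp, Cz_of_lt (by omega)]
  rcases lt_or_ge (n : ℤ) p with hpn | hpn
  · rw [Cz_of_neg (by omega), Cz_of_lt hpn]
  lift p to ℕ using hp
  rw [← Nat.cast_sub (by omega), Cz_natCast, Cz_natCast, Nat.choose_symm (by omega)]

def ballot (n : ℕ) (j : ℤ) : ℤ := Cz (2 * n) (n - j) - Cz (2 * n) (n - j - 1)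

lemma ballot_of_lt {n : ℕ} {j : ℤ} (h : (n : ℤ) < j) : ballot n j = 0 := by
  rw [ballot, Cz_of_neg (by omega), Cz_of_neg (by omega), sub_zero]

lemma ballot_succ (n : ℕ) (j : ℤ) :
    ballot (n + 1) j = ballot n (j - 1) + 2 * ballot n j + ballot n (j + 1) := by
  simp only [ballot, mul_add, mul_one, Cz_add_two, Nat.cast_add, Nat.cast_one]
  ring_nf

lemma ballot_neg_one (n : ℕ) : ballot n (-1) = -ballot n 0 := by
  have h : Cz (2 * n) (n + 1) = Cz (2 * n) (n - 1) := by
    rw [← Cz_symm]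
    push_cast
    ring_nf
  simp only [ballot, sub_neg_eq_add, sub_zero, add_sub_cancel_right, h]
  ring

def ballotConv (i : ℕ) (j : ℤ) : ℤ :=
  ∑ p ∈ antidiagonal i, Cz (2 * p.1) p.1 * ballot p.2 j

lemma ballotConv_eq_sum_range (i : ℕ) (j : ℤ) :
    ballotConv i j = ∑ l ∈ range (i + 1), Cz (2 * l) l * ballot (i - l) j :=
  Nat.sum_antidiagonal_eq_sum_range_succ (fun a b => Cz (2 * a) a * ballot b j) i

lemma ballotConv_succ (i : ℕ) (j : ℤ) :
    ballotConv (i + 1) j = Cz (2 * (i + 1)) (i + 1 : ℕ) * ballot 0 j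
      + ballotConv i (j - 1) + 2 * ballotConv i j + ballotConv i (j + 1) := by
  simp only [ballotConv, Nat.sum_antidiagonal_succ', ballot_succ, mul_add, sum_add_distrib,
    mul_left_comm _ (2 : ℤ), ← mul_sum]
  ring

lemma ballotConv_neg_one (i : ℕ) : ballotConv i (-1) = -ballotConv i 0 := by
  simp only [ballotConv, ballot_neg_one, mul_neg, sum_neg_distrib]

lemma ballotConv_eq (i : ℕ) {j : ℤ} (hj : 0 ≤ j) : ballotConv i j = Cz (2 * i + 1) (i - j) := by
  induction i generalizing j with
  | zero =>
    lift j to ℕ using hj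
    simp [ballotConv, ballot, Cz_succ 0, Cz_of_neg (by omega : -(j : ℤ) - 1 < 0),
      show Cz 0 0 = 1 from rfl]
  | succ i ih =>
    rw [ballotConv_succ]
    rcases hj.eq_or_lt with rfl | hpos
    · rw [zero_sub, ballotConv_neg_one, zero_add, ih le_rfl, ih zero_le_one,
        show ballot 0 0 = 1 from rfl, Nat.cast_succ, sub_zero, sub_zero, Cz_succ (2 * (i + 1)),
        add_sub_cancel_right, show 2 * (i + 1) = 2 * i + 1 + 1 by ring, Cz_succ (2 * i + 1) i]
      ring
    · rw [ballot_of_lt (by omega), ih (by omega), ih hj, ih (by omega),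
        show 2 * (i + 1) + 1 = 2 * i + 1 + 2 by ring, Cz_add_two]
      push_cast
      ring_nf

lemma sum_Icc_min_of_eq_zero {M : Type*} [AddCommMonoid M] {f : ℕ → M} {i : ℕ}
    (hf : ∀ j, i < j → f j = 0) (a n : ℕ) :
    ∑ j ∈ Icc a (min i n), f j = ∑ j ∈ Icc a n, f j :=
  sum_subset (Icc_subset_Icc_right (min_le_right _ _)) fun j hj hj' =>
    hf j (by simp only [mem_Icc, le_min_iff, not_and, not_le] at hj hj'; omega)

def binomialForm (r : A) (g : ℕ → A) (m : ℕ) (b : ℕ → ℤ) : A :=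
  b 0 - ∑ k ∈ Icc 2 m, g k * r ^ k *
    ∑ j ∈ Icc 1 (k - 1), (b j : A) * ((Cz (2 * k - 1) ((k : ℤ) + j) : ℤ) : A)

lemma sum_mul_binomialForm {ι : Type*} (s : Finset ι) (c : ι → ℤ) (b : ι → ℕ → ℤ) (r : A)
    (g : ℕ → A) (m : ℕ) :
    ∑ x ∈ s, (c x : A) * binomialForm r g m (b x)
      = binomialForm r g m fun j => ∑ x ∈ s, c x * b x j := by
  simp only [binomialForm, mul_sub, sum_sub_distrib, Int.cast_sum, Int.cast_mul, mul_sum, sum_mul]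
  congr 1
  rw [sum_comm]
  refine sum_congr rfl fun k _ => ?_
  rw [sum_comm]
  refine sum_congr rfl fun j _ => sum_congr rfl fun x _ => by ring

lemma pow_mul_binomialForm (r : A) (g : ℕ → A) (m : ℕ) {i : ℕ} {b : ℕ → ℤ}
    (hb : ∀ j, i < j → b j = 0) :
    r ^ i * binomialForm r g m b = (b 0 : A) * r ^ i -
      ∑ k ∈ Icc 2 m, g k * r ^ (i + k) *
        ∑ j ∈ Icc 1 (min i (k - 1)), (b j : A) * ((Cz (2 * k - 1) ((k : ℤ) + j) : ℤ) : A) := by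
  simp only [binomialForm, mul_sub, mul_sum, pow_add]
  congr 1
  · ring
  refine sum_congr rfl fun k _ => ?_
  rw [sum_Icc_min_of_eq_zero fun j hj => by simp [hb j hj]]
  refine sum_congr rfl fun j _ => by ring

lemma gammaVal_eq (r : A) (g : ℕ → A) (m n : ℕ) :
    gammaVal r g m n = r ^ n * binomialForm r g m fun j => ballot n j := by
  rw [pow_mul_binomialForm r g m fun j hj => ballot_of_lt (by omega)]
  simp only [gammaVal, ballot, Nat.cast_zero, sub_zero]

theorem stmt_12_general {A : Type*} [CommRing A] (r : A) (m : ℕ) (g : ℕ → A)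
    (i : ℕ) :
    ∑ l ∈ Finset.range (i + 1), gammaVal r g m (i - l) * ((Cz (2 * l) (l : ℤ) : ℤ) : A) * r ^ l =
      ((Cz (2 * i + 1) (i : ℤ) : ℤ) : A) * r ^ i -
        ∑ k ∈ Finset.Icc 2 m, g k * r ^ (i + k) *
          ∑ j ∈ Finset.Icc 1 (min i (k - 1)),
            ((Cz (2 * i + 1) ((i : ℤ) - j) : ℤ) : A) * ((Cz (2 * k - 1) ((k : ℤ) + j) : ℤ) : A) := by
  have hconv : (fun j : ℕ => ∑ l ∈ range (i + 1), Cz (2 * l) l * ballot (i - l) j)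
      = fun j : ℕ => Cz (2 * i + 1) (i - j) :=
    funext fun j => by rw [← ballotConv_eq_sum_range, ballotConv_eq i j.cast_nonneg]
  calc _ = ∑ l ∈ range (i + 1),
          r ^ i * (((Cz (2 * l) l : ℤ) : A) * binomialForm r g m fun j => ballot (i - l) j) :=
        sum_congr rfl fun l hl => by
          rw [gammaVal_eq, ← pow_sub_mul_pow r (Nat.le_of_lt_succ (mem_range.1 hl))]
          ring
    _ = r ^ i * binomialForm r g m fun j : ℕ => Cz (2 * i + 1) (i - j) := by
        rw [← mul_sum, sum_mul_binomialForm, hconv]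
    _ = _ := by
        rw [pow_mul_binomialForm r g m fun j hj => Cz_of_neg (by omega), Nat.cast_zero, sub_zero]

/-- equivalence of the two formulas for the multi-point functions. -/
theorem stmt_12 {A : Type*} [CommRing A] (r : A) (m : ℕ) (hm : 2 ≤ m) (g : ℕ → A)
    (i : ℕ) :
    ∑ l ∈ Finset.range (i + 1), gammaVal r g m (i - l) * ((Cz (2 * l) (l : ℤ) : ℤ) : A) * r ^ l =
      ((Cz (2 * i + 1) (i : ℤ) : ℤ) : A) * r ^ i -
        ∑ k ∈ Finset.Icc 2 m, g k * r ^ (i + k) *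
          ∑ j ∈ Finset.Icc 1 (min i (k - 1)),
            ((Cz (2 * i + 1) ((i : ℤ) - j) : ℤ) : A) * ((Cz (2 * k - 1) ((k : ℤ) + j) : ℤ) : A) :=
  stmt_12_general r m g i
end
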